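/- arXiv:2409.19765 — 6 statements merged into one kernel-verified Lean document; each statement's English description precedes it below -/
import Mathlib

section
/- Let G be a finite directed acyclic graph with vertex set I and arc set A, and let o, d ∈ I with o ≠ d. Assume: (i) for every vertex i ∈ I with i ≠ d, there exists a directed path in G from i to d; and (ii) there exist at least two distinct directed paths in G from o to d. Then there exists a vertex i* ∈ I \ {d} such that i* has at least two outgoing arcs, and for every outgoing arc a of i* with head vertex j_a, either j_a = d or there is exactly one directed path in G from j_a to d. -/
/-- `IsWalk tail head u v l` : the list of arcs `l` forms a directed walk from vertex `u`
to vertex `v` in the directed (multi)graph whose arcs `a` go from `tail a` to `head a`. -/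
def IsWalk {A V : Type*} (tail head : A → V) : V → V → List A → Prop
  | u, v, [] => u = v
  | u, v, a :: l => tail a = u ∧ IsWalk tail head (head a) v l

theorem isWalk_append {A V : Type*} (tail head : A → V) {u v w : V} {l m : List A}
    (h1 : IsWalk tail head u v l) (h2 : IsWalk tail head v w m) :
    IsWalk tail head u w (l ++ m) := by
  induction l generalizing u with
  | nil => cases h1; simpa using h2
  | cons a l ih => exact ⟨h1.1, ih h1.2⟩

theorem transGen_walk {A V : Type*} (tail head : A → V) {u w : V}
    (h : Relation.TransGen (fun u w => ∃ a : A, tail a = u ∧ head a = w) u w) :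
    ∃ l : List A, l ≠ [] ∧ IsWalk tail head u w l := by
  induction h with
  | single hE =>
      obtain ⟨a, ha, hb⟩ := hE
      exact ⟨[a], by simp, ha, by simpa [IsWalk] using hb⟩
  | tail _ hE ih =>
      obtain ⟨l, hl, hwalk⟩ := ih
      obtain ⟨a, ha, hb⟩ := hE
      exact ⟨l ++ [a], by simp, isWalk_append tail head hwalk ⟨ha, by simpa [IsWalk] using hb⟩⟩


/-- (Lemma 2 of the paper.) Let `G` be a finite directed acyclic graph
with vertices `V` and arcs `A` (an arc `a` goes from `tail a` to `head a`) and let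
`o ≠ d` be vertices such that (i) every vertex other than `d` has a directed path to `d`,
and (ii) there are at least two distinct directed paths from `o` to `d`. Then there is a
vertex `i* ≠ d` with at least two outgoing arcs such that every outgoing arc of `i*`
either ends at `d` or has exactly one directed path from its head to `d`. -/
theorem stmt_3 {A V : Type*} [Fintype A] [Fintype V] [DecidableEq V]
    (tail head : A → V) (o d : V) (hod : o ≠ d)
    (hacyclic : ∀ (v : V) (l : List A), l ≠ [] → ¬ IsWalk tail head v v l)
    (hreach : ∀ i : V, i ≠ d → ∃ l : List A, IsWalk tail head i d l)
    (htwo : ∃ l₁ l₂ : List A, l₁ ≠ l₂ ∧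
      IsWalk tail head o d l₁ ∧ IsWalk tail head o d l₂) :
    ∃ istar : V, istar ≠ d ∧
      2 ≤ (Finset.univ.filter fun a : A => tail a = istar).card ∧
      ∀ a : A, tail a = istar →
        (head a = d ∨ ∃! l : List A, IsWalk tail head (head a) d l) := by
  classical
  set E : V → V → Prop := fun u w => ∃ a : A, tail a = u ∧ head a = w with hE
  set S : V → Prop := fun v => ∃ l₁ l₂ : List A, l₁ ≠ l₂ ∧
      IsWalk tail head v d l₁ ∧ IsWalk tail head v d l₂ with hS
  have hirr : IsIrrefl V (Relation.TransGen (Function.swap E)) := by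
    constructor
    intro v hv
    rw [← Relation.transGen_swap] at hv
    obtain ⟨l, hl, hwalk⟩ := transGen_walk tail head hv
    exact hacyclic v l hl hwalk
  have htrans : IsTrans V (Relation.TransGen (Function.swap E)) :=
    ⟨fun _ _ _ => Relation.TransGen.trans⟩
  have hwf : WellFounded (Function.swap E) :=
    Subrelation.wf (fun h => Relation.TransGen.single h)
      (Finite.wellFounded_of_trans_of_irrefl _)
  have main : ∀ v : V, S v →
      ∃ istar : V, istar ≠ d ∧
        2 ≤ (Finset.univ.filter fun a : A => tail a = istar).card ∧
        ∀ a : A, tail a = istar →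
          (head a = d ∨ ∃! l : List A, IsWalk tail head (head a) d l) := by
    intro v
    induction v using hwf.induction with
    | _ v ih =>
      rintro ⟨l₁, l₂, hne, h₁, h₂⟩
      have hvd : v ≠ d := by
        rintro rfl
        match l₁, l₂, hne with
        | [], [], hne => exact hne rfl
        | [], a :: l, _ => exact hacyclic _ (a :: l) (by simp) h₂
        | a :: l, _, _ => exact hacyclic _ (a :: l) (by simp) h₁
      match l₁, l₂, hne, h₁, h₂ with
      | [], _, _, h₁, _ => exact absurd h₁ hvd
      | _ :: _, [], _, _, h₂ => exact absurd h₂ hvd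
      | a :: l₁, b :: l₂, hne, h₁, h₂ =>
        by_cases hsucc : ∃ c : A, tail c = v ∧ S (head c)
        · obtain ⟨c, hc, hcs⟩ := hsucc
          exact ih (head c) ⟨c, hc, rfl⟩ hcs
        · push_neg at hsucc
          have hab : a ≠ b := by
            rintro rfl
            exact hsucc a h₁.1 ⟨l₁, l₂, by simpa using hne, h₁.2, h₂.2⟩
          refine ⟨v, hvd, ?_, ?_⟩
          · refine Finset.one_lt_card.2 ⟨a, ?_, b, ?_, hab⟩ <;>
              simp [h₁.1, h₂.1]
          · intro c hc
            by_cases hcd : head c = d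
            · exact Or.inl hcd
            · obtain ⟨l, hl⟩ := hreach (head c) hcd
              refine Or.inr ⟨l, hl, fun m hm => ?_⟩
              by_contra hml
              exact hsucc c hc ⟨m, l, hml, hm, hl⟩
  exact main o htwo
end

section
/- Let n ≥ 1 be an integer and let z, z⁻, z⁺ : {1,…,n} → ℝ satisfy z⁻_a ≤ z_a ≤ z⁺_a for every a. Let β* > 0 and let a* ∈ {1,…,n} be an index minimizing z, i.e., z_{a*} ≤ z_a for all a. Define κ := exp(−β* z_{a*}) / Σ_{a=1}^{n} exp(−β* z_a). Then there exists β ∈ [0, β*] such that exp(−β z⁻_{a*}) / Σ_{a=1}^{n} exp(−β z⁺_a) = κ. -/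
/-- Existence of an entropy-parameter estimate `β ∈ [0, β*]` solving the
fixed-point equation `exp(−β z⁻_{a*}) / Σ_a exp(−β z⁺_a) = κ`, where
`κ = exp(−β* z_{a*}) / Σ_a exp(−β* z_a)` is the logit choice probability of the
cost-minimizing index `a*` and `z⁻ ≤ z ≤ z⁺` componentwise. -/
theorem stmt_4
    (n : ℕ) (hn : 1 ≤ n)
    (z zminus zplus : Fin n → ℝ)
    (hlow : ∀ a, zminus a ≤ z a) (hhigh : ∀ a, z a ≤ zplus a)
    (βstar : ℝ) (hβstar : 0 < βstar)
    (astar : Fin n) (hastar : ∀ a, z astar ≤ z a)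
    (κ : ℝ)
    (hκ : κ = Real.exp (-βstar * z astar) / ∑ a : Fin n, Real.exp (-βstar * z a)) :
    ∃ β ∈ Set.Icc (0 : ℝ) βstar,
      Real.exp (-β * zminus astar) / ∑ a : Fin n, Real.exp (-β * zplus a) = κ := by
  set f : ℝ → ℝ := fun β => Real.exp (-β * zminus astar) / ∑ a : Fin n, Real.exp (-β * zplus a)
    with hf
  have hSpos : ∀ (β : ℝ) (w : Fin n → ℝ), 0 < ∑ a : Fin n, Real.exp (-β * w a) := by
    intro β w
    apply Finset.sum_pos (fun a _ => Real.exp_pos _)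
    exact Finset.univ_nonempty_iff.mpr ⟨⟨0, hn⟩⟩
  have hcont : ContinuousOn f (Set.Icc 0 βstar) := by
    apply Continuous.continuousOn
    apply Continuous.div
    · continuity
    · continuity
    · intro β; exact (hSpos β zplus).ne'
  have hf0 : f 0 = 1 / n := by
    simp [hf]
  have hκ1 : 1 / (n : ℝ) ≤ κ := by
    rw [hκ]
    have hnpos : (0 : ℝ) < n := by exact_mod_cast hn
    rw [div_le_div_iff₀ hnpos (hSpos βstar z)]
    have : ∑ a : Fin n, Real.exp (-βstar * z a) ≤
        ∑ _a : Fin n, Real.exp (-βstar * z astar) := by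
      apply Finset.sum_le_sum
      intro a _
      exact Real.exp_le_exp.mpr (by nlinarith [hastar a])
    simpa [mul_comm] using this
  have hκ2 : κ ≤ f βstar := by
    rw [hκ, hf]
    apply div_le_div₀ (Real.exp_pos _).le
    · exact Real.exp_le_exp.mpr (by nlinarith [hlow astar])
    · exact hSpos βstar zplus
    · exact Finset.sum_le_sum fun a _ =>
        Real.exp_le_exp.mpr (by nlinarith [hhigh a])
  have := intermediate_value_Icc hβstar.le hcont
  have hmem : κ ∈ Set.Icc (f 0) (f βstar) := ⟨hf0 ▸ hκ1, hκ2⟩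
  obtain ⟨β, hβ, hfβ⟩ := this hmem
  exact ⟨β, hβ, hfβ⟩
end

section
/- Let A be a finite arc set, N a nonempty finite node set with m := |N|, and tail : A → N a map assigning each arc its tail node, such that every node has at least one arc with that tail. Let g_o > 0 and let w : A → [0,∞) satisfy Σ_{a: tail(a)=i} w_a ≤ g_o for every i ∈ N. Define the entropy term χ(w) := Σ_{i∈N} [ Σ_{a: tail(a)=i} w_a ln w_a − (Σ_{a: tail(a)=i} w_a) · ln(Σ_{a: tail(a)=i} w_a) ], with the convention 0·ln 0 = 0. Then |χ(w)| ≤ g_o · m · ln(|A| / m). -/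
/-!
Group the arcs by their tail node. Within a group of `n` arcs carrying total flow `S`, the
quantity `Σ w ln w − S ln S` is `−S` times the Shannon entropy of the normalised flows, hence
lies in `[−S ln n, 0]`; by Jensen for `x ln x` this costs at most `g_o ln n` per node. Summing,
`|χ(w)| ≤ g_o Σᵢ ln nᵢ`, and since the group sizes `nᵢ ≥ 1` add up to `|A|`, concavity of `ln`
(AM–GM) gives `Σᵢ ln nᵢ ≤ m ln(|A|/m)`.
-/

open Finset

/-- The entropy term `χ(w) = Σ_{i∈N} [ Σ_{a : tail a = i} w_a ln w_a
    − (Σ_{a : tail a = i} w_a) ln (Σ_{a : tail a = i} w_a) ]`.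
The convention `0 · ln 0 = 0` holds automatically since `Real.log 0 = 0`. -/
noncomputable def entropyTerm {A N : Type*} [Fintype A] [Fintype N] [DecidableEq N]
    (tail : A → N) (w : A → ℝ) : ℝ :=
  ∑ i : N,
    ((∑ a ∈ univ.filter fun a => tail a = i, w a * Real.log (w a))
      - (∑ a ∈ univ.filter fun a => tail a = i, w a)
        * Real.log (∑ a ∈ univ.filter fun a => tail a = i, w a))

section Jensen

variable {ι : Type*} {s : Set ℝ} {f : ℝ → ℝ}

theorem ConvexOn.card_mul_map_sum_div_card_le (hf : ConvexOn ℝ s f) (t : Finset ι)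
    (p : ι → ℝ) (hp : ∀ i ∈ t, p i ∈ s) :
    #t * f ((∑ i ∈ t, p i) / #t) ≤ ∑ i ∈ t, f (p i) := by
  rcases t.eq_empty_or_nonempty with rfl | ht
  · simp
  have hcard : (#t : ℝ) ≠ 0 := by exact_mod_cast ht.card_pos.ne'
  have h := hf.map_sum_le (t := t) (w := fun _ => (#t : ℝ)⁻¹) (p := p)
    (fun _ _ => by positivity) (by simp [hcard]) hp
  simp only [smul_eq_mul, ← mul_sum] at h
  rw [inv_mul_eq_div] at h
  calc #t * f ((∑ i ∈ t, p i) / #t) ≤ #t * ((#t : ℝ)⁻¹ * ∑ i ∈ t, f (p i)) := by gcongr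
    _ = ∑ i ∈ t, f (p i) := by field_simp

theorem ConcaveOn.sum_map_le_card_mul_map_sum_div_card (hf : ConcaveOn ℝ s f) (t : Finset ι)
    (p : ι → ℝ) (hp : ∀ i ∈ t, p i ∈ s) :
    ∑ i ∈ t, f (p i) ≤ #t * f ((∑ i ∈ t, p i) / #t) := by
  have h := hf.neg.card_mul_map_sum_div_card_le t p hp
  simp only [Pi.neg_apply, sum_neg_distrib, mul_neg] at h
  exact neg_le_neg_iff.mp h

end Jensen

namespace Real

variable {ι : Type*}

theorem sum_log_le_card_mul_log_sum_div_card (s : Finset ι) {x : ι → ℝ}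
    (hx : ∀ i ∈ s, 0 < x i) :
    ∑ i ∈ s, log (x i) ≤ #s * log ((∑ i ∈ s, x i) / #s) :=
  strictConcaveOn_log_Ioi.concaveOn.sum_map_le_card_mul_map_sum_div_card s x hx

theorem sum_mul_log_le_sum_mul_log_sum (s : Finset ι) {w : ι → ℝ} (hw : ∀ i ∈ s, 0 ≤ w i) :
    ∑ i ∈ s, w i * log (w i) ≤ (∑ i ∈ s, w i) * log (∑ i ∈ s, w i) := by
  rw [sum_mul]
  refine sum_le_sum fun i hi => ?_
  rcases (hw i hi).eq_or_lt with h | h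
  · simp [← h]
  · exact mul_le_mul_of_nonneg_left (log_le_log h (single_le_sum hw hi)) h.le

theorem sum_mul_log_sum_div_card_le_sum_mul_log (s : Finset ι) {w : ι → ℝ}
    (hw : ∀ i ∈ s, 0 ≤ w i) :
    (∑ i ∈ s, w i) * log ((∑ i ∈ s, w i) / #s) ≤ ∑ i ∈ s, w i * log (w i) := by
  rcases s.eq_empty_or_nonempty with rfl | hs
  · simp
  have hcard : (#s : ℝ) ≠ 0 := by exact_mod_cast hs.card_pos.ne'
  have h := convexOn_mul_log.card_mul_map_sum_div_card_le s w hw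
  rwa [← mul_assoc, mul_div_cancel₀ _ hcard] at h

theorem abs_sum_mul_log_sub_le (s : Finset ι) {w : ι → ℝ} (hw : ∀ i ∈ s, 0 ≤ w i) :
    |∑ i ∈ s, w i * log (w i) - (∑ i ∈ s, w i) * log (∑ i ∈ s, w i)|
      ≤ (∑ i ∈ s, w i) * log #s := by
  set S := ∑ i ∈ s, w i
  have hS : 0 ≤ S := sum_nonneg hw
  have hlower : S * log S - S * log #s ≤ ∑ i ∈ s, w i * log (w i) := by
    rcases hS.eq_or_lt with h | h
    · have hw0 := (sum_eq_zero_iff_of_nonneg hw).mp h.symm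
      rw [← h, sum_eq_zero fun i hi => by rw [hw0 i hi, zero_mul]]
      simp
    · have hs : s.Nonempty := nonempty_of_sum_ne_zero h.ne'
      rw [← mul_sub, ← log_div h.ne' (by exact_mod_cast hs.card_pos.ne')]
      exact sum_mul_log_sum_div_card_le_sum_mul_log s hw
  rw [abs_le]
  constructor
  · linarith
  · have := sum_mul_log_le_sum_mul_log_sum s hw
    have := mul_nonneg hS (log_natCast_nonneg #s)
    linarith

end Real

theorem stmt_8_general {A N : Type*} [Fintype A] [Fintype N] [DecidableEq N]
    (tail : A → N) (htail : ∀ i : N, ∃ a : A, tail a = i)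
    (go : ℝ) (hgo : 0 < go)
    (w : A → ℝ) (hw : ∀ a, 0 ≤ w a)
    (hflow : ∀ i : N, ∑ a ∈ univ.filter fun a => tail a = i, w a ≤ go) :
    |entropyTerm tail w|
      ≤ go * (Fintype.card N : ℝ)
          * Real.log ((Fintype.card A : ℝ) / (Fintype.card N : ℝ)) := by
  set n : N → ℕ := fun i => #{a | tail a = i}
  have hn : ∀ i, (0 : ℝ) < n i := fun i => by
    obtain ⟨a, ha⟩ := htail i
    exact_mod_cast card_pos.mpr ⟨a, by simp [ha]⟩
  have hsum : ∑ i, (n i : ℝ) = Fintype.card A := by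
    exact_mod_cast (card_eq_sum_card_fiberwise (s := univ) (t := univ) (f := tail)
      fun _ _ => mem_univ _).symm
  calc |entropyTerm tail w|
      ≤ ∑ i, (∑ a with tail a = i, w a) * Real.log (n i) :=
        (abs_sum_le_sum_abs _ _).trans
          (sum_le_sum fun i _ => Real.abs_sum_mul_log_sub_le _ fun a _ => hw a)
    _ ≤ ∑ i, go * Real.log (n i) :=
        sum_le_sum fun i _ => mul_le_mul_of_nonneg_right (hflow i) (Real.log_natCast_nonneg _)
    _ = go * ∑ i, Real.log (n i) := by rw [mul_sum]
    _ ≤ go * (Fintype.card N * Real.log (Fintype.card A / Fintype.card N)) := by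
        gcongr
        simpa [hsum] using Real.sum_log_le_card_mul_log_sum_div_card univ fun i _ => hn i
    _ = _ := by ring

/-- (Lemma 11 of the paper.) If every node is the tail of at least one arc
and the total flow out of each node is at most `g_o`, then the entropy term satisfies
`|χ(w)| ≤ g_o · m · ln(|A|/m)`, where `m = |N|`. -/
theorem stmt_8 {A N : Type*} [Fintype A] [Fintype N] [DecidableEq N] [Nonempty N]
    (tail : A → N) (htail : ∀ i : N, ∃ a : A, tail a = i)
    (go : ℝ) (hgo : 0 < go)
    (w : A → ℝ) (hw : ∀ a, 0 ≤ w a)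
    (hflow : ∀ i : N, ∑ a ∈ univ.filter fun a => tail a = i, w a ≤ go) :
    |entropyTerm tail w|
      ≤ go * (Fintype.card N : ℝ)
          * Real.log ((Fintype.card A : ℝ) / (Fintype.card N : ℝ)) :=
  stmt_8_general tail htail go hgo w hw hflow
end

section
/- Let T ≥ 1 be an integer and g_o ≥ 1 real. Let w_1, …, w_T be reals with 1 ≤ w_t ≤ g_o for all t, set n_t := ⌊w_t⌋, V_0 := 1 and V_t := 1 + Σ_{j=1}^{t} n_j (w_j)². Then Σ_{t=1}^{T} min{ 1, n_t (w_t)² / V_{t−1} } ≤ (1/ln 2) · ln(1 + T·g_o³). -/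
lemma aux_min_le_log {x : ℝ} (hx : 0 ≤ x) :
    min 1 x ≤ Real.log (1 + x) / Real.log 2 := by
  have h2 : 0 < Real.log 2 := Real.log_pos one_lt_two
  rcases le_or_gt 1 x with h | h
  · rw [min_eq_left h, le_div_iff₀ h2, one_mul]
    exact Real.log_le_log (by norm_num) (by linarith)
  · rw [min_eq_right h.le, le_div_iff₀ h2]
    have hc := strictConcaveOn_log_Ioi.concaveOn.2
      (Set.mem_Ioi.mpr (by norm_num : (0:ℝ) < 1))
      (Set.mem_Ioi.mpr (by norm_num : (0:ℝ) < 2))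
      (show (0:ℝ) ≤ 1 - x by linarith) hx (show (1 - x) + x = 1 by ring)
    simp only [smul_eq_mul, Real.log_one, mul_zero, zero_add, mul_one] at hc
    have he : 1 - x + x * 2 = 1 + x := by ring
    rw [he] at hc
    linarith

/-- Elliptic-potential bound (Lemma 7 of the paper, with explicit constant):
with `n_t = ⌊w_t⌋`, `V_0 = 1`, `V_t = 1 + Σ_{j=1}^t n_j w_j²` and `1 ≤ w_t ≤ g_o`,
`Σ_{t=1}^T min{1, n_t w_t² / V_{t−1}} ≤ (1/ln 2) ln(1 + T g_o³)`. -/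
theorem stmt_9
    (T : ℕ) (hT : 1 ≤ T) (go : ℝ) (hgo : 1 ≤ go)
    (w : ℕ → ℝ) (hw : ∀ t ∈ Finset.Icc 1 T, 1 ≤ w t ∧ w t ≤ go)
    (V : ℕ → ℝ)
    (hV : ∀ t, V t = 1 + ∑ j ∈ Finset.Icc 1 t, (⌊w j⌋₊ : ℝ) * (w j) ^ 2) :
    ∑ t ∈ Finset.Icc 1 T, min 1 ((⌊w t⌋₊ : ℝ) * (w t) ^ 2 / V (t - 1))
      ≤ (1 / Real.log 2) * Real.log (1 + (T : ℝ) * go ^ 3) := by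
  have h2 : 0 < Real.log 2 := Real.log_pos one_lt_two
  have hV1 : ∀ t, 1 ≤ V t := by
    intro t
    rw [hV]
    have : 0 ≤ ∑ j ∈ Finset.Icc 1 t, (⌊w j⌋₊ : ℝ) * (w j) ^ 2 :=
      Finset.sum_nonneg fun j _ => by positivity
    linarith
  have hVpos : ∀ t, 0 < V t := fun t => lt_of_lt_of_le one_pos (hV1 t)
  have hstep : ∀ t ∈ Finset.Icc 1 T,
      V t = V (t - 1) + (⌊w t⌋₊ : ℝ) * (w t) ^ 2 := by
    intro t ht
    obtain ⟨ht1, _⟩ := Finset.mem_Icc.mp ht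
    obtain ⟨s, rfl⟩ : ∃ s, t = s + 1 := ⟨t - 1, by omega⟩
    simp only [Nat.add_sub_cancel]
    rw [hV, hV, Finset.sum_Icc_succ_top (Nat.le_add_left 1 s)]
    ring
  -- pointwise bound: min 1 x_t ≤ (log V t - log V (t-1)) / log 2
  have hpt : ∀ t ∈ Finset.Icc 1 T,
      min 1 ((⌊w t⌋₊ : ℝ) * (w t) ^ 2 / V (t - 1))
        ≤ (Real.log (V t) - Real.log (V (t - 1))) / Real.log 2 := by
    intro t ht
    have hx : 0 ≤ (⌊w t⌋₊ : ℝ) * (w t) ^ 2 / V (t - 1) :=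
      div_nonneg (by positivity) (hVpos _).le
    refine (aux_min_le_log hx).trans (le_of_eq ?_)
    congr 1
    rw [← Real.log_div (ne_of_gt (hVpos t)) (ne_of_gt (hVpos (t - 1)))]
    congr 1
    rw [eq_div_iff (ne_of_gt (hVpos (t - 1))), add_mul, one_mul,
      div_mul_cancel₀ _ (ne_of_gt (hVpos (t - 1))), hstep t ht]
  calc ∑ t ∈ Finset.Icc 1 T, min 1 ((⌊w t⌋₊ : ℝ) * (w t) ^ 2 / V (t - 1))
      ≤ ∑ t ∈ Finset.Icc 1 T, (Real.log (V t) - Real.log (V (t - 1))) / Real.log 2 :=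
        Finset.sum_le_sum hpt
    _ = (1 / Real.log 2) * ∑ t ∈ Finset.Icc 1 T, (Real.log (V t) - Real.log (V (t - 1))) := by
        rw [Finset.mul_sum]; exact Finset.sum_congr rfl fun t _ => by ring
    _ = (1 / Real.log 2) * (Real.log (V T) - Real.log (V 0)) := by
        congr 1
        have hIcc : Finset.Icc 1 T = Finset.Ico 1 (T + 1) := by
          rw [Finset.Ico_add_one_right_eq_Icc]
        rw [hIcc, Finset.sum_Ico_eq_sum_range]
        simp only [Nat.add_sub_cancel]
        have : ∀ i ∈ Finset.range T,
            Real.log (V (1 + i)) - Real.log (V (1 + i - 1))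
              = Real.log (V (i + 1)) - Real.log (V i) := by
          intro i _
          rw [add_comm 1 i, Nat.add_sub_cancel]
        rw [Finset.sum_congr rfl this, Finset.sum_range_sub (fun i => Real.log (V i))]
    _ ≤ (1 / Real.log 2) * Real.log (1 + (T : ℝ) * go ^ 3) := by
        have hlog : Real.log (V T) - Real.log (V 0) ≤ Real.log (1 + (T : ℝ) * go ^ 3) := by
          have hV0 : Real.log (V 0) = 0 := by
            rw [hV]; simp
          rw [hV0, sub_zero]
          apply Real.log_le_log (hVpos T)
          rw [hV]
          have hbound : ∀ j ∈ Finset.Icc 1 T, (⌊w j⌋₊ : ℝ) * (w j) ^ 2 ≤ go ^ 3 := by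
            intro j hj
            obtain ⟨hw1, hw2⟩ := hw j hj
            have h0 : 0 ≤ w j := by linarith
            have hn : (⌊w j⌋₊ : ℝ) ≤ w j := Nat.floor_le h0
            have hwg : w j ≤ go := hw2
            calc (⌊w j⌋₊ : ℝ) * (w j) ^ 2 ≤ go * go ^ 2 := by
                  apply mul_le_mul (hn.trans hwg) (by nlinarith) (by positivity) (by linarith)
              _ = go ^ 3 := by ring
          have := Finset.sum_le_sum hbound
          have hcard : ∑ j ∈ Finset.Icc 1 T, go ^ 3 = (T : ℝ) * go ^ 3 := by
            rw [Finset.sum_const, Nat.card_Icc]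
            simp [nsmul_eq_mul]
          linarith [hcard ▸ this]
        have : 0 < 1 / Real.log 2 := by positivity
        exact mul_le_mul_of_nonneg_left hlog this.le
end

section
/- For every C_θ > 0 and every real p ≥ 1 there exists a constant K > 0, depending only on C_θ and p, with the following property. Let T ≥ 2 be an integer, g_o ≥ 1 real, A a nonempty finite set, and for each a ∈ A and t ∈ {1,…,T} let w_a^t ∈ [1, g_o] be real; set n_a^t := ⌊w_a^t⌋, V_a^0 := 1, V_a^t := 1 + Σ_{j=1}^{t} n_a^j (w_a^j)², and γ_a^t := C_θ + sqrt(2 ln T + 2 ln V_a^{t−1}). Then Σ_{t=1}^{T} Σ_{a∈A} min{ C_θ, 2γ_a^t / sqrt(V_a^{t−1}) } · (w_a^t)^p ≤ K · g_o^p · |A| · sqrt(T) · ln(T·g_o). -/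
set_option maxHeartbeats 1000000

lemma sum_inv_sqrt_le (T : ℕ) :
    ∑ t ∈ Finset.Icc 1 T, (1:ℝ)/Real.sqrt t ≤ 2 * Real.sqrt T := by
  induction T with
  | zero => simp
  | succ T ih =>
    rw [Finset.sum_Icc_succ_top (by omega : 1 ≤ T + 1)]
    have hT : (0:ℝ) ≤ (T:ℝ) := Nat.cast_nonneg T
    set a := Real.sqrt T with ha
    set b := Real.sqrt ((T:ℝ)+1) with hb
    have hb' : Real.sqrt ((T+1 : ℕ) : ℝ) = b := by push_cast; rfl
    have ha2 : a^2 = T := Real.sq_sqrt hT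
    have hb2 : b^2 = (T:ℝ)+1 := Real.sq_sqrt (by linarith)
    have ha0 : 0 ≤ a := Real.sqrt_nonneg _
    have hb0 : 0 < b := Real.sqrt_pos.mpr (by linarith)
    have key : 1/b ≤ 2*b - 2*a := by
      rw [div_le_iff₀ hb0]
      nlinarith [sq_nonneg (a - b)]
    rw [hb']
    linarith

/-- (Lemma 8 of the paper, deterministic form.) For every `C_θ > 0` and
`p ≥ 1` there is a constant `K > 0` depending only on `C_θ` and `p` such that, for flows
`w_a^t ∈ [1, g_o]`, design sums `V_a^t = 1 + Σ_{j≤t} ⌊w_a^j⌋ (w_a^j)²` and radii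
`γ_a^t = C_θ + √(2 ln T + 2 ln V_a^{t−1})`,
`Σ_{t=1}^T Σ_a min{C_θ, 2γ_a^t/√(V_a^{t−1})} (w_a^t)^p ≤ K g_o^p |A| √T ln(T g_o)`. -/
theorem stmt_10 (Cθ : ℝ) (hCθ : 0 < Cθ) (p : ℝ) (hp : 1 ≤ p) :
    ∃ K : ℝ, 0 < K ∧
      ∀ (T : ℕ), 2 ≤ T → ∀ (go : ℝ), 1 ≤ go → ∀ (n : ℕ), 1 ≤ n →
      ∀ (w : ℕ → Fin n → ℝ),
        (∀ t ∈ Finset.Icc 1 T, ∀ a, 1 ≤ w t a ∧ w t a ≤ go) →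
      ∀ (V : ℕ → Fin n → ℝ),
        (∀ t a, V t a = 1 + ∑ j ∈ Finset.Icc 1 t, (⌊w j a⌋₊ : ℝ) * (w j a) ^ 2) →
      ∀ (γ : ℕ → Fin n → ℝ),
        (∀ t a, γ t a = Cθ + Real.sqrt (2 * Real.log T + 2 * Real.log (V (t - 1) a))) →
      ∑ t ∈ Finset.Icc 1 T, ∑ a : Fin n,
          min Cθ (2 * γ t a / Real.sqrt (V (t - 1) a)) * (w t a) ^ p
        ≤ K * go ^ p * (n : ℝ) * Real.sqrt T * Real.log ((T : ℝ) * go) := by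
  have hlog2 : (0:ℝ) < Real.log 2 := Real.log_pos (by norm_num)
  set C1 : ℝ := Cθ / Real.log 2 + Real.sqrt 8 / Real.sqrt (Real.log 2) with hC1
  have hC1pos : 0 < C1 := by positivity
  refine ⟨4 * C1, by positivity, ?_⟩
  intro T hT go hgo n hn w hw V hV γ hγ
  set L := Real.log ((T:ℝ) * go) with hL
  have hT2 : (2:ℝ) ≤ (T:ℝ) := by exact_mod_cast hT
  have hgo0 : (0:ℝ) < go := by linarith
  have hTgo : (2:ℝ) ≤ (T:ℝ) * go := by nlinarith
  have hLlog2 : Real.log 2 ≤ L := Real.log_le_log (by norm_num) hTgo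
  have hL0 : 0 < L := lt_of_lt_of_le hlog2 hLlog2
  -- per-term bound
  have key : ∀ t ∈ Finset.Icc 1 T, ∀ a : Fin n,
      min Cθ (2 * γ t a / Real.sqrt (V (t - 1) a)) * (w t a) ^ p
        ≤ 2 * C1 * L / Real.sqrt t * go ^ p := by
    intro t ht a
    obtain ⟨ht1, htT⟩ := Finset.mem_Icc.mp ht
    have ht0 : (1:ℝ) ≤ (t:ℝ) := by exact_mod_cast ht1
    -- bounds on w over Icc 1 (t-1)
    have hwj : ∀ j ∈ Finset.Icc 1 (t-1),
        1 ≤ (⌊w j a⌋₊ : ℝ) * (w j a) ^ 2 ∧ (⌊w j a⌋₊ : ℝ) * (w j a) ^ 2 ≤ go ^ 3 := by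
      intro j hj
      obtain ⟨hj1, hj2⟩ := Finset.mem_Icc.mp hj
      have hjT : j ∈ Finset.Icc 1 T := Finset.mem_Icc.mpr ⟨hj1, by omega⟩
      obtain ⟨hw1, hw2⟩ := hw j hjT a
      have hfl1 : (1:ℝ) ≤ (⌊w j a⌋₊ : ℝ) := by
        exact_mod_cast Nat.one_le_cast.mpr (Nat.le_floor (by exact_mod_cast hw1))
      have hfl2 : (⌊w j a⌋₊ : ℝ) ≤ go :=
        le_trans (Nat.floor_le (by linarith)) hw2
      constructor
      · nlinarith
      · have : (w j a)^2 ≤ go^2 := by nlinarith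
        calc (⌊w j a⌋₊ : ℝ) * (w j a) ^ 2 ≤ go * go^2 := by
              apply mul_le_mul hfl2 this (by nlinarith) (by linarith)
          _ = go ^ 3 := by ring
    have hVt : (t:ℝ) ≤ V (t-1) a := by
      rw [hV]
      have h1 : ((t-1 : ℕ) : ℝ) * 1 ≤ ∑ j ∈ Finset.Icc 1 (t-1), (⌊w j a⌋₊ : ℝ) * (w j a) ^ 2 := by
        have := Finset.card_nsmul_le_sum (Finset.Icc 1 (t-1))
          (fun j => (⌊w j a⌋₊ : ℝ) * (w j a) ^ 2) 1 (fun j hj => (hwj j hj).1)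
        simpa [Nat.card_Icc, nsmul_eq_mul] using this
      have hc : ((t-1:ℕ):ℝ) = (t:ℝ) - 1 := by
        push_cast [Nat.cast_sub ht1]; ring
      rw [hc] at h1
      linarith
    have hV1 : (1:ℝ) ≤ V (t-1) a := le_trans ht0 hVt
    have hVle : V (t-1) a ≤ ((T:ℝ) * go) ^ 3 := by
      rw [hV]
      have h2 : ∑ j ∈ Finset.Icc 1 (t-1), (⌊w j a⌋₊ : ℝ) * (w j a) ^ 2
          ≤ ((t-1:ℕ):ℝ) * go^3 := by
        have := Finset.sum_le_card_nsmul (Finset.Icc 1 (t-1))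
          (fun j => (⌊w j a⌋₊ : ℝ) * (w j a) ^ 2) (go^3) (fun j hj => (hwj j hj).2)
        simpa [Nat.card_Icc, nsmul_eq_mul] using this
      have hc : ((t-1:ℕ):ℝ) ≤ (T:ℝ) - 1 := by
        have : ((t-1:ℕ):ℝ) = (t:ℝ) - 1 := by push_cast [Nat.cast_sub ht1]; ring
        have htT' : (t:ℝ) ≤ T := by exact_mod_cast htT
        linarith
      have hgo3 : (1:ℝ) ≤ go ^ 3 := one_le_pow₀ hgo
      have : 1 + ∑ j ∈ Finset.Icc 1 (t-1), (⌊w j a⌋₊ : ℝ) * (w j a) ^ 2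
          ≤ 1 + ((T:ℝ) - 1) * go^3 := by nlinarith
      have h3 : 1 + ((T:ℝ) - 1) * go^3 ≤ (T:ℝ) * go^3 := by nlinarith
      have h4 : (T:ℝ) * go^3 ≤ ((T:ℝ)*go)^3 := by
        have hT3 : (T:ℝ) ≤ (T:ℝ)^3 := le_self_pow₀ (by linarith) (by norm_num)
        calc (T:ℝ) * go^3 ≤ (T:ℝ)^3 * go^3 := by nlinarith
          _ = ((T:ℝ)*go)^3 := by ring
      linarith
    -- log bounds
    have hlogV : Real.log (V (t-1) a) ≤ 3 * L := by
      calc Real.log (V (t-1) a) ≤ Real.log (((T:ℝ)*go)^3) :=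
            Real.log_le_log (by linarith) hVle
        _ = 3 * L := by rw [Real.log_pow]; push_cast; ring
    have hlogV0 : 0 ≤ Real.log (V (t-1) a) := Real.log_nonneg hV1
    have hlogT : Real.log T ≤ L := Real.log_le_log (by linarith) (by nlinarith)
    have hlogT0 : 0 ≤ Real.log (T:ℝ) := Real.log_nonneg (by linarith)
    -- γ bound
    have hγle : γ t a ≤ C1 * L := by
      rw [hγ]
      have h1 : 2 * Real.log T + 2 * Real.log (V (t-1) a) ≤ 8 * L := by linarith
      have h2 : Real.sqrt (2 * Real.log T + 2 * Real.log (V (t-1) a))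
          ≤ Real.sqrt (8 * L) := Real.sqrt_le_sqrt h1
      have h3 : Real.sqrt (8 * L) = Real.sqrt 8 * Real.sqrt L :=
        Real.sqrt_mul (by norm_num) _
      have h4 : Real.sqrt L ≤ L / Real.sqrt (Real.log 2) := by
        rw [le_div_iff₀ (Real.sqrt_pos.mpr hlog2)]
        calc Real.sqrt L * Real.sqrt (Real.log 2) ≤ Real.sqrt L * Real.sqrt L :=
              mul_le_mul_of_nonneg_left (Real.sqrt_le_sqrt hLlog2) (Real.sqrt_nonneg _)
          _ = L := Real.mul_self_sqrt hL0.le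
      have h5 : Cθ ≤ Cθ / Real.log 2 * L := by
        rw [div_mul_eq_mul_div, le_div_iff₀ hlog2]
        nlinarith
      have h6 : Real.sqrt 8 * Real.sqrt L ≤ Real.sqrt 8 * (L / Real.sqrt (Real.log 2)) :=
        mul_le_mul_of_nonneg_left h4 (Real.sqrt_nonneg _)
      have : C1 * L = Cθ / Real.log 2 * L + Real.sqrt 8 * (L / Real.sqrt (Real.log 2)) := by
        rw [hC1]; ring
      rw [this]
      linarith
    have hγ0 : 0 ≤ γ t a := by rw [hγ]; positivity
    -- min bound
    have hst : 0 < Real.sqrt t := Real.sqrt_pos.mpr (by linarith)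
    have hmin : min Cθ (2 * γ t a / Real.sqrt (V (t - 1) a)) ≤ 2 * C1 * L / Real.sqrt t := by
      refine le_trans (min_le_right _ _) ?_
      apply div_le_div₀ (by positivity) (by linarith) hst (Real.sqrt_le_sqrt hVt)
    have hmin0 : 0 ≤ min Cθ (2 * γ t a / Real.sqrt (V (t - 1) a)) :=
      le_min hCθ.le (by positivity)
    -- w^p bound
    obtain ⟨hw1, hw2⟩ := hw t ht a
    have hwp : (w t a) ^ p ≤ go ^ p :=
      Real.rpow_le_rpow (by linarith) hw2 (by linarith)
    have hwp0 : 0 ≤ (w t a) ^ p := Real.rpow_nonneg (by linarith) p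
    exact mul_le_mul hmin hwp hwp0 (by positivity)
  calc ∑ t ∈ Finset.Icc 1 T, ∑ a : Fin n,
          min Cθ (2 * γ t a / Real.sqrt (V (t - 1) a)) * (w t a) ^ p
      ≤ ∑ t ∈ Finset.Icc 1 T, ∑ a : Fin n, 2 * C1 * L / Real.sqrt t * go ^ p :=
        Finset.sum_le_sum (fun t ht => Finset.sum_le_sum (fun a _ => key t ht a))
    _ = (2 * C1 * L * go ^ p * n) * ∑ t ∈ Finset.Icc 1 T, (1:ℝ)/Real.sqrt t := by
        rw [Finset.mul_sum]
        apply Finset.sum_congr rfl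
        intro t _
        rw [Finset.sum_const, Finset.card_univ, Fintype.card_fin, nsmul_eq_mul]
        ring
    _ ≤ (2 * C1 * L * go ^ p * n) * (2 * Real.sqrt T) := by
        apply mul_le_mul_of_nonneg_left (sum_inv_sqrt_le T)
        have hgp : (0:ℝ) ≤ go ^ p := Real.rpow_nonneg hgo0.le p
        have hn' : (0:ℝ) ≤ (n:ℝ) := Nat.cast_nonneg n
        positivity
    _ = 4 * C1 * go ^ p * (n : ℝ) * Real.sqrt T * L := by ring
end

section
/- For all reals β* > c_β > 0, Δ > 0, and C_θ > 0 there exists a constant K > 0, depending only on β*, c_β, Δ, and C_θ, with the following property. Let T ≥ 2 be an integer, g_o ≥ 1 real, S a nonempty finite set, and for each a ∈ S and t ∈ {1,…,T} let w_a^t ∈ [1, g_o] be real; set n_a^t := ⌊w_a^t⌋, V_a^0 := 1, V_a^t := 1 + Σ_{j=1}^{t} n_a^j (w_a^j)², and γ_a^t := C_θ + sqrt(2 ln T + 2 ln V_a^{t−1}). Suppose β^1, …, β^T are reals satisfying, for every t, |β^t − β*| ≤ min{ β* − c_β, (β* g_o / Δ) · Σ_{a∈S} (2γ_a^t / sqrt(V_a^{t−1}))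 · w_a^t }. Then Σ_{t=1}^{T} |β^t − β*| ≤ K · g_o · |S| · sqrt(T) · ln(T·g_o). -/
/-!
Each term satisfies `|β^t − β*| ≤ min(B, D Σ_a x_a^t) ≤ Σ_a min(B, D x_a^t)` with
`B = β* − c_β`, `D = β* g_o/Δ`, so it suffices to bound the sum over `t` for one arc `a`.
Since `V_a^t ≤ (T g_o)^4`, the radius `γ_a^t` is `O(√log(T g_o))`, and since `n_a^t ≥ 1`,
`w_a^t/√V_a^{t−1} ≤ √r_t` with `r_t = n_a^t (w_a^t)²/V_a^{t−1}`. Hence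
`min(B, D x_a^t) ≤ (B + Q) √(min(1, r_t))` with `Q = O(g_o √log(T g_o))`. Cauchy–Schwarz
bounds the sum over `t` by `(B + Q) √T √(Σ_t min(1, r_t))`, and the elliptic potential lemma gives
`Σ_t min(1, r_t) ≤ 2 log V_a^T ≤ 8 log(T g_o)`.
-/

open Finset Real

lemma min_one_le_two_mul_log_one_add {y : ℝ} (hy : 0 ≤ y) : min 1 y ≤ 2 * log (1 + y) := by
  have hlog : 1 - (1 + y)⁻¹ ≤ log (1 + y) := one_sub_inv_le_log_of_pos (by linarith)
  have hmin : min 1 y ≤ 2 * (1 - (1 + y)⁻¹) := by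
    rw [show 2 * (1 - (1 + y)⁻¹) = 2 * y / (1 + y) by field_simp; ring,
      le_div_iff₀ (by linarith)]
    rcases le_total y 1 with h | h
    · rw [min_eq_right h]; nlinarith
    · rw [min_eq_left h]; nlinarith
  linarith

/-- The elliptic potential lemma. -/
lemma sum_min_one_div_one_add_sum_le_two_mul_log (c : ℕ → ℝ) (hc : ∀ t, 0 ≤ c t)
    (T : ℕ) :
    ∑ t ∈ Icc 1 T, min 1 (c t / (1 + ∑ j ∈ Icc 1 (t - 1), c j))
      ≤ 2 * log (1 + ∑ j ∈ Icc 1 T, c j) := by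
  induction T with
  | zero => simp
  | succ T ih =>
    set S := 1 + ∑ j ∈ Icc 1 T, c j
    have hS : 0 < S := by positivity [sum_nonneg fun j (_ : j ∈ Icc 1 T) => hc j]
    have hstep := min_one_le_two_mul_log_one_add (div_nonneg (hc (T + 1)) hS.le)
    rw [show 1 + c (T + 1) / S = (S + c (T + 1)) / S by field_simp,
      log_div (by linarith [hc (T + 1)]) hS.ne'] at hstep
    rw [sum_Icc_succ_top (by omega), sum_Icc_succ_top (by omega), Nat.add_sub_cancel,
      ← add_assoc]
    linarith

lemma min_sum_le_sum_min {ι M : Type*} [AddCommMonoid M] [LinearOrder M] [IsOrderedAddMonoid M]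
    (s : Finset ι) {b : M} (hb : 0 ≤ b) {f : ι → M} (hf : ∀ i ∈ s, 0 ≤ f i) :
    min b (∑ i ∈ s, f i) ≤ ∑ i ∈ s, min b (f i) := by
  by_cases h : ∃ i ∈ s, b ≤ f i
  · obtain ⟨i, hi, hbi⟩ := h
    calc min b (∑ i ∈ s, f i) ≤ min b (f i) := (min_le_left _ _).trans (min_eq_left hbi).ge
      _ ≤ ∑ i ∈ s, min b (f i) := single_le_sum (fun j hj => le_min hb (hf j hj)) hi
  · push Not at h
    calc min b (∑ i ∈ s, f i) ≤ ∑ i ∈ s, f i := min_le_right _ _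
      _ = ∑ i ∈ s, min b (f i) := sum_congr rfl fun i hi => (min_eq_right (h i hi).le).symm

lemma min_mul_le_add_mul_min_one {p q r : ℝ} (hp : 0 ≤ p) (hq : 0 ≤ q) (hr : 0 ≤ r) :
    min p (q * r) ≤ (p + q) * min 1 r := by
  rcases le_total 1 r with h | h
  · rw [min_eq_left h, mul_one]; exact (min_le_left _ _).trans (by linarith)
  · rw [min_eq_right h]; exact (min_le_right _ _).trans (by nlinarith)

lemma sum_min_le_of_le_mul_sqrt {ι : Type*} (s : Finset ι) {b q : ℝ} (hb : 0 ≤ b)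
    (hq : 0 ≤ q) {x r : ι → ℝ} (hr : ∀ i ∈ s, 0 ≤ r i) (hx : ∀ i ∈ s, x i ≤ q * √(r i)) :
    ∑ i ∈ s, min b (x i) ≤ (b + q) * (√(#s : ℝ) * √(∑ i ∈ s, min 1 (r i))) := by
  have hterm : ∀ i ∈ s, min b (x i) ≤ (b + q) * √(min 1 (r i)) := fun i hi =>
    calc min b (x i) ≤ min b (q * √(r i)) := min_le_min_left _ (hx i hi)
      _ ≤ (b + q) * min 1 (√(r i)) := min_mul_le_add_mul_min_one hb hq (sqrt_nonneg _)
      _ = (b + q) * √(min 1 (r i)) := by rw [sqrt_monotone.map_min, sqrt_one]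
  have hcs : ∑ i ∈ s, √(min 1 (r i)) ≤ √(#s : ℝ) * √(∑ i ∈ s, min 1 (r i)) := by
    have h := sum_mul_le_sqrt_mul_sqrt s (fun _ => 1) (fun i => √(min 1 (r i)))
    rw [sum_congr rfl fun i hi => sq_sqrt (le_min zero_le_one (hr i hi))] at h
    simpa using h
  calc ∑ i ∈ s, min b (x i) ≤ ∑ i ∈ s, (b + q) * √(min 1 (r i)) := sum_le_sum hterm
    _ = (b + q) * ∑ i ∈ s, √(min 1 (r i)) := (mul_sum _ _ _).symm
    _ ≤ (b + q) * (√(#s : ℝ) * √(∑ i ∈ s, min 1 (r i))) := by gcongr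

noncomputable def designSum (w : ℕ → ℝ) (t : ℕ) : ℝ :=
  1 + ∑ j ∈ Icc 1 t, (⌊w j⌋₊ : ℝ) * w j ^ 2

lemma one_le_designSum (w : ℕ → ℝ) (t : ℕ) : 1 ≤ designSum w t :=
  le_add_of_nonneg_right (sum_nonneg fun _ _ => by positivity)

lemma designSum_le_pow {w : ℕ → ℝ} {T : ℕ} {g : ℝ} (hT : 2 ≤ T) (hg : 1 ≤ g)
    (hw : ∀ t ∈ Icc 1 T, 1 ≤ w t ∧ w t ≤ g) {t : ℕ} (ht : t ≤ T) :
    designSum w t ≤ (T * g) ^ 4 := by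
  have hterm : ∀ j ∈ Icc 1 T, (⌊w j⌋₊ : ℝ) * w j ^ 2 ≤ g ^ 3 := fun j hj => by
    obtain ⟨hw1, hwg⟩ := hw j hj
    calc (⌊w j⌋₊ : ℝ) * w j ^ 2 ≤ g * g ^ 2 := by
          gcongr
          exact (Nat.floor_le (by linarith)).trans hwg
      _ = g ^ 3 := by ring
  have hsum : ∑ j ∈ Icc 1 t, (⌊w j⌋₊ : ℝ) * w j ^ 2 ≤ T * g ^ 3 :=
    calc ∑ j ∈ Icc 1 t, (⌊w j⌋₊ : ℝ) * w j ^ 2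
        ≤ ∑ j ∈ Icc 1 T, (⌊w j⌋₊ : ℝ) * w j ^ 2 :=
          sum_le_sum_of_subset_of_nonneg (Icc_subset_Icc_right ht) fun _ _ _ => by positivity
      _ ≤ ∑ j ∈ Icc 1 T, g ^ 3 := sum_le_sum hterm
      _ = T * g ^ 3 := by simp
  have hT' : (2 : ℝ) ≤ T := by exact_mod_cast hT
  have hg3 : 1 ≤ g ^ 3 := one_le_pow₀ hg
  have hT4 : (T : ℝ) ^ 2 ≤ T ^ 4 := pow_le_pow_right₀ (by linarith) (by norm_num)
  have hg4 : g ^ 3 ≤ g ^ 4 := pow_le_pow_right₀ hg (by norm_num)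
  calc designSum w t ≤ 1 + T * g ^ 3 := by unfold designSum; linarith
    _ ≤ T ^ 2 * g ^ 3 := by
        have h1 : 1 ≤ (T : ℝ) * g ^ 3 := one_le_mul_of_one_le_of_one_le (by linarith) hg3
        nlinarith [mul_le_mul_of_nonneg_right hT' (by linarith : (0 : ℝ) ≤ T * g ^ 3)]
    _ ≤ T ^ 4 * g ^ 4 := by gcongr
    _ = (T * g) ^ 4 := by ring

lemma div_sqrt_le_sqrt_floor_mul_sq_div {x v : ℝ} (hx : 1 ≤ x) (hv : 0 ≤ v) :
    x / √v ≤ √((⌊x⌋₊ : ℝ) * x ^ 2 / v) := by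
  have hfloor : (1 : ℝ) ≤ ⌊x⌋₊ := by exact_mod_cast Nat.le_floor (by exact_mod_cast hx)
  calc x / √v = √(x ^ 2 / v) := by rw [sqrt_div (sq_nonneg x), sqrt_sq (by linarith)]
    _ ≤ √((⌊x⌋₊ : ℝ) * x ^ 2 / v) := by
        gcongr
        exact le_mul_of_one_le_left (sq_nonneg x) hfloor

lemma log_two_le_log_natCast_mul {T : ℕ} {g : ℝ} (hT : 2 ≤ T) (hg : 1 ≤ g) :
    log 2 ≤ log (T * g) := by
  have hT' : (2 : ℝ) ≤ T := by exact_mod_cast hT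
  exact log_le_log (by norm_num) (by nlinarith)

lemma confidence_radius_le {C g v : ℝ} {T : ℕ} (hC : 0 ≤ C) (hT : 2 ≤ T) (hg : 1 ≤ g)
    (hv : 0 < v) (hvT : v ≤ (T * g) ^ 4) :
    C + √(2 * log T + 2 * log v) ≤ (C / √(log 2) + √10) * √(log (T * g)) := by
  have hT' : (2 : ℝ) ≤ T := by exact_mod_cast hT
  have hL := log_two_le_log_natCast_mul hT hg
  have hlogT : log T ≤ log (T * g) := log_le_log (by linarith) (by nlinarith)
  have hlogv : log v ≤ 4 * log (T * g) := by
    simpa using log_le_log hv hvT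
  have hs2 : 0 < √(log 2) := sqrt_pos.2 (log_pos one_lt_two)
  have hC' : C ≤ C / √(log 2) * √(log (T * g)) := by
    rw [div_mul_eq_mul_div, le_div_iff₀ hs2]
    exact mul_le_mul_of_nonneg_left (sqrt_le_sqrt hL) hC
  have hrad : √(2 * log T + 2 * log v) ≤ √10 * √(log (T * g)) := by
    rw [← sqrt_mul (by norm_num)]; exact sqrt_le_sqrt (by linarith)
  linarith

lemma sqrt_le_div_sqrt {a x : ℝ} (ha : 0 < a) (hax : a ≤ x) : √x ≤ x / √a := by
  rw [le_div_iff₀ (sqrt_pos.2 ha)]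
  calc √x * √a ≤ √x * √x := by gcongr
    _ = x := mul_self_sqrt (ha.le.trans hax)

lemma sum_min_one_floor_mul_sq_div_designSum_le {T : ℕ} {g : ℝ} (hT : 2 ≤ T) (hg : 1 ≤ g)
    {w : ℕ → ℝ} (hw : ∀ t ∈ Icc 1 T, 1 ≤ w t ∧ w t ≤ g) :
    ∑ t ∈ Icc 1 T, min 1 ((⌊w t⌋₊ : ℝ) * w t ^ 2 / designSum w (t - 1))
      ≤ 8 * log (T * g) := by
  have hlog : log (designSum w T) ≤ 4 * log (T * g) := by
    simpa using log_le_log (one_pos.trans_le (one_le_designSum w T))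
      (designSum_le_pow hT hg hw le_rfl)
  have h := sum_min_one_div_one_add_sum_le_two_mul_log
    (fun t => (⌊w t⌋₊ : ℝ) * w t ^ 2) (fun t => by positivity) T
  exact h.trans (by unfold designSum at hlog; linarith)

lemma sum_min_confidence_width_le {b e C g : ℝ} {T : ℕ} (hb : 0 ≤ b) (he : 0 ≤ e)
    (hC : 0 ≤ C) (hT : 2 ≤ T) (hg : 1 ≤ g) {w : ℕ → ℝ}
    (hw : ∀ t ∈ Icc 1 T, 1 ≤ w t ∧ w t ≤ g) :
    ∑ t ∈ Icc 1 T, min b (e * g * (2 * (C + √(2 * log T + 2 * log (designSum w (t - 1))))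
        / √(designSum w (t - 1)) * w t))
      ≤ √8 * (b / √(log 2) + 2 * e * (C / √(log 2) + √10)) * g * √T * log (T * g) := by
  set L := log (T * g)
  set c := C / √(log 2) + √10
  set r : ℕ → ℝ := fun t => (⌊w t⌋₊ : ℝ) * w t ^ 2 / designSum w (t - 1)
  have hc : 0 ≤ c := by positivity
  have hg₀ : 0 ≤ g := by linarith
  have hL : log 2 ≤ L := log_two_le_log_natCast_mul hT hg
  have hV : ∀ t, 0 < designSum w t := fun t => one_pos.trans_le (one_le_designSum w t)
  have hx : ∀ t ∈ Icc 1 T,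
      e * g * (2 * (C + √(2 * log T + 2 * log (designSum w (t - 1))))
        / √(designSum w (t - 1)) * w t) ≤ 2 * e * g * c * √L * √(r t) := fun t ht => by
    have hγ := confidence_radius_le hC hT hg (hV (t - 1))
      (designSum_le_pow hT hg hw (t := t - 1) (by have := (mem_Icc.1 ht).2; omega))
    have hw' := div_sqrt_le_sqrt_floor_mul_sq_div (hw t ht).1 (hV (t - 1)).le
    have hw₀ : 0 ≤ w t / √(designSum w (t - 1)) :=
      div_nonneg (by linarith [hw t ht]) (sqrt_nonneg _)
    calc _ = 2 * e * g * (C + √(2 * log T + 2 * log (designSum w (t - 1))))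
            * (w t / √(designSum w (t - 1))) := by ring
      _ ≤ 2 * e * g * (c * √L) * √(r t) := by gcongr
      _ = _ := by ring
  have hL₀ : 0 ≤ L := (log_pos one_lt_two).le.trans hL
  have hLL : √L * √L = L := mul_self_sqrt hL₀
  have hbL : b * √L ≤ b * (L / √(log 2)) * g :=
    calc b * √L ≤ b * (L / √(log 2)) := by
          gcongr; exact sqrt_le_div_sqrt (log_pos one_lt_two) hL
      _ ≤ b * (L / √(log 2)) * g := le_mul_of_one_le_right (by positivity) hg
  calc _ ≤ (b + 2 * e * g * c * √L)
          * (√(#(Icc 1 T) : ℝ) * √(∑ t ∈ Icc 1 T, min 1 (r t))) :=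
        sum_min_le_of_le_mul_sqrt _ hb (by positivity)
          (fun t _ => div_nonneg (by positivity) (hV _).le) hx
    _ ≤ (b + 2 * e * g * c * √L) * (√T * (√8 * √L)) := by
        rw [Nat.card_Icc, Nat.add_sub_cancel, ← sqrt_mul (by norm_num : (0 : ℝ) ≤ 8) L]
        gcongr
        exact sum_min_one_floor_mul_sq_div_designSum_le hT hg hw
    _ = √8 * √T * (b * √L + 2 * e * g * c * (√L * √L)) := by ring
    _ ≤ √8 * √T * (b * (L / √(log 2)) * g + 2 * e * g * c * (√L * √L)) := by gcongr
    _ = _ := by rw [hLL]; ring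

/-- (Lemma 9 of the paper, deterministic form.) For `β* > c_β > 0`,
`Δ > 0`, `C_θ > 0` there is `K > 0` depending only on these such that, with flows
`w_a^t ∈ [1, g_o]`, design sums `V_a^t = 1 + Σ_{j≤t} ⌊w_a^j⌋ (w_a^j)²`, radii
`γ_a^t = C_θ + √(2 ln T + 2 ln V_a^{t−1})`, and entropy-parameter estimates satisfying
`|β^t − β*| ≤ min{β* − c_β, (β* g_o/Δ) Σ_a (2γ_a^t/√(V_a^{t−1})) w_a^t}`, one has
`Σ_{t=1}^T |β^t − β*| ≤ K g_o |S| √T ln(T g_o)`. -/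
theorem stmt_11 (βstar cβ Δ Cθ : ℝ) (hcβ : 0 < cβ) (hβstar : cβ < βstar)
    (hΔ : 0 < Δ) (hCθ : 0 < Cθ) :
    ∃ K : ℝ, 0 < K ∧
      ∀ (T : ℕ), 2 ≤ T → ∀ (go : ℝ), 1 ≤ go → ∀ (n : ℕ), 1 ≤ n →
      ∀ (w : ℕ → Fin n → ℝ),
        (∀ t ∈ Finset.Icc 1 T, ∀ a, 1 ≤ w t a ∧ w t a ≤ go) →
      ∀ (V : ℕ → Fin n → ℝ),
        (∀ t a, V t a = 1 + ∑ j ∈ Finset.Icc 1 t, (⌊w j a⌋₊ : ℝ) * (w j a) ^ 2) →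
      ∀ (γ : ℕ → Fin n → ℝ),
        (∀ t a, γ t a = Cθ + Real.sqrt (2 * Real.log T + 2 * Real.log (V (t - 1) a))) →
      ∀ (β : ℕ → ℝ),
        (∀ t ∈ Finset.Icc 1 T,
          |β t - βstar| ≤ min (βstar - cβ)
            ((βstar * go / Δ) *
              ∑ a : Fin n, (2 * γ t a / Real.sqrt (V (t - 1) a)) * w t a)) →
      ∑ t ∈ Finset.Icc 1 T, |β t - βstar|
        ≤ K * go * (n : ℝ) * Real.sqrt T * Real.log ((T : ℝ) * go) := by
  have hB : 0 < βstar - cβ := sub_pos.2 hβstar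
  have hE : 0 ≤ βstar / Δ := div_nonneg (hcβ.trans hβstar).le hΔ.le
  refine ⟨√8 * ((βstar - cβ) / √(log 2) + 2 * (βstar / Δ) * (Cθ / √(log 2) + √10)),
    by positivity, ?_⟩
  intro T hT go hgo n _ w hw V hV γ hγ β hβ
  have hV' : ∀ t a, V t a = designSum (fun j => w j a) t := hV
  have hγ₀ : ∀ t a, 0 ≤ γ t a := fun t a => by rw [hγ]; positivity
  calc ∑ t ∈ Icc 1 T, |β t - βstar|
      ≤ ∑ t ∈ Icc 1 T, ∑ a, min (βstar - cβ)
          (βstar / Δ * go * (2 * γ t a / √(V (t - 1) a) * w t a)) := by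
        refine sum_le_sum fun t ht => (hβ t ht).trans ?_
        rw [mul_div_right_comm, mul_sum]
        exact min_sum_le_sum_min _ hB.le fun a _ =>
          mul_nonneg (by positivity)
            (mul_nonneg (by positivity [hγ₀ t a]) (by linarith [hw t ht a]))
    _ = ∑ a, ∑ t ∈ Icc 1 T, min (βstar - cβ)
          (βstar / Δ * go * (2 * γ t a / √(V (t - 1) a) * w t a)) := sum_comm
    _ ≤ ∑ _a : Fin n,
          √8 * ((βstar - cβ) / √(log 2) + 2 * (βstar / Δ) * (Cθ / √(log 2) + √10))
            * go * √T * log (T * go) := sum_le_sum fun a _ => by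
        simpa only [hγ, hV'] using sum_min_confidence_width_le hB.le hE hCθ.le hT hgo
          (w := fun t => w t a) fun t ht => hw t ht a
    _ = _ := by simp only [sum_const, card_univ, Fintype.card_fin, nsmul_eq_mul]; ring
end
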